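/- arXiv:2409.15967 — 4 statements merged into one kernel-verified Lean document; each statement's English description precedes it below -/
import Mathlib

section
/- Measure convergence of perturbed domains: Let Ω ⊆ ℝ^d be a bounded open set whose topological frontier is a Lebesgue nullset, λ^d(∂Ω) = 0, and let V : ℝ^d → ℝ^d be a continuous bounded vector field. Then the Lebesgue measure of the symmetric difference λ^d(Ω_ε Δ Ω) converges to 0 as ε → 0. -/
open Filter MeasureTheory
open scoped symmDiff

/-- Measure convergence of perturbed domains. -/
theorem measure_convergence_of_perturbed_domains
    {d : ℕ} (Ω : Set (EuclideanSpace ℝ (Fin d)))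
    (hΩ_open : IsOpen Ω) (hΩ_bdd : Bornology.IsBounded Ω)
    (hfrontier : volume (frontier Ω) = 0)
    (V : EuclideanSpace ℝ (Fin d) → EuclideanSpace ℝ (Fin d))
    (hV_cont : Continuous V) (hVbdd : ∃ M : ℝ, ∀ x, ‖V x‖ ≤ M) :
    Tendsto (fun ε : ℝ => volume (({x | x + ε • V x ∈ Ω} : Set (EuclideanSpace ℝ (Fin d))) ∆ Ω))
      (nhds 0) (nhds 0) := by
  obtain ⟨M, hM⟩ := hVbdd
  have hM0 : 0 ≤ M := le_trans (norm_nonneg _) (hM 0)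
  set S : ℝ → Set (EuclideanSpace ℝ (Fin d)) :=
    fun ε => ({x | x + ε • V x ∈ Ω} : Set _) ∆ Ω with hS
  have hopen : ∀ ε : ℝ, IsOpen ({x | x + ε • V x ∈ Ω} : Set (EuclideanSpace ℝ (Fin d))) :=
    fun ε => hΩ_open.preimage (continuous_id.add (hV_cont.const_smul ε))
  have hmeas : ∀ ε, MeasurableSet (S ε) := fun ε =>
    (hopen ε).measurableSet.symmDiff hΩ_open.measurableSet
  set K := Metric.cthickening M Ω with hK
  have hKvol : volume K ≠ ⊤ := by
    have hb : Bornology.IsBounded K := hΩ_bdd.cthickening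
    exact hb.measure_lt_top.ne
  have hsub : ∀ ε : ℝ, |ε| ≤ 1 → S ε ⊆ K := by
    intro ε hε x hx
    rcases Set.mem_symmDiff.mp hx with ⟨hx1, -⟩ | ⟨hx2, -⟩
    · refine Metric.mem_cthickening_of_dist_le x (x + ε • V x) M Ω hx1 ?_
      rw [dist_eq_norm]
      have heq : x - (x + ε • V x) = -(ε • V x) := by abel
      rw [heq, norm_neg, norm_smul, Real.norm_eq_abs]
      calc |ε| * ‖V x‖ ≤ 1 * M := mul_le_mul hε (hM x) (norm_nonneg _) zero_le_one
        _ = M := one_mul M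
    · exact Metric.self_subset_cthickening Ω hx2
  have hae : ∀ᵐ x : EuclideanSpace ℝ (Fin d), x ∉ frontier Ω := by
    rw [ae_iff]; simpa using hfrontier
  have hlim : ∀ᵐ x : EuclideanSpace ℝ (Fin d),
      ∀ᶠ ε : ℝ in nhds 0, x ∈ S ε ↔ x ∈ (∅ : Set (EuclideanSpace ℝ (Fin d))) := by
    filter_upwards [hae] with x hx
    have hf : Tendsto (fun ε : ℝ => x + ε • V x) (nhds 0) (nhds x) := by
      have hc : Continuous (fun ε : ℝ => x + ε • V x) :=
        continuous_const.add ((continuous_id).smul continuous_const)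
      simpa using hc.tendsto 0
    have hev : ∀ᶠ ε : ℝ in nhds 0, x ∉ S ε := by
      rcases em (x ∈ Ω) with hxΩ | hxΩ
      · have h1 : ∀ᶠ ε : ℝ in nhds 0, x + ε • V x ∈ Ω :=
          hf.eventually (hΩ_open.eventually_mem hxΩ)
        filter_upwards [h1] with ε hε hcon
        rcases Set.mem_symmDiff.mp hcon with ⟨-, h2⟩ | ⟨-, h2⟩
        · exact h2 hxΩ
        · exact h2 hε
      · have hxcl : x ∉ closure Ω := by
          intro hcl
          apply hx
          rw [frontier, hΩ_open.interior_eq]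
          exact ⟨hcl, hxΩ⟩
        have h1 : ∀ᶠ ε : ℝ in nhds 0, x + ε • V x ∈ (closure Ω)ᶜ :=
          hf.eventually ((isOpen_compl_iff.mpr isClosed_closure).eventually_mem hxcl)
        filter_upwards [h1] with ε hε hcon
        rcases Set.mem_symmDiff.mp hcon with ⟨h1', -⟩ | ⟨h1', -⟩
        · exact hε (subset_closure h1')
        · exact hxΩ h1'
    filter_upwards [hev] with ε hε
    simp [hε]
  have hAsB : ∀ᶠ ε : ℝ in nhds 0, S ε ⊆ K := by
    have h1 : ∀ᶠ ε : ℝ in nhds 0, |ε| ≤ 1 := by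
      have := eventually_abs_sub_lt (0 : ℝ) one_pos
      filter_upwards [this] with ε hε
      simpa using hε.le
    filter_upwards [h1] with ε hε
    exact hsub ε hε
  have key := tendsto_measure_of_ae_tendsto_indicator (μ := volume) (nhds (0 : ℝ))
    MeasurableSet.empty hmeas (Metric.isClosed_cthickening).measurableSet hKvol hAsB hlim
  simpa using key
end

section
/- Volume-change integral limit (Jacobian term of the shape-derivative splitting): Let Ω ⊆ ℝ^d be a bounded open set with λ^d(∂Ω) = 0, let V : ℝ^d → ℝ^d be an admissible distortion, and let h : ℝ^d → ℝ be continuous. Then lim_{ε→0} (1/ε) ∫_{Ω_ε} h(x) · (1 − |det(I_d + ε DV(x))|) dλ^d(x) = − ∫_Ω h(x) · div V(x) dλ^d(x), where DV denotes the Jacobian matrix of V and div V its divergence. -/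
/-!
Expanding `det (1 + ε • M) = 1 + ε * trace M + O(ε²)` shows that
`(1 - |det (id + ε • DV x)|) / ε` tends to `-div V x`. Since `det` is smooth, hence Lipschitz on
compact sets, this quotient is bounded uniformly in `x` on a ball containing every `Ω_ε` with
`|ε| ≤ 1`. Off the null set `∂Ω`, a point lies in `Ω_ε` exactly when it lies in `Ω` for all small
`ε`, and dominated convergence concludes.
-/

open Filter Topology MeasureTheory Metric

@[simp]
theorem ContinuousLinearMap.det_id {R M : Type*} [CommRing R] [TopologicalSpace M]
    [AddCommGroup M] [Module R M] : (ContinuousLinearMap.id R M).det = 1 :=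
  LinearMap.det_id

open Polynomial in
theorem Matrix.hasDerivAt_det_one_add_smul {n : Type*} [Fintype n] [DecidableEq n]
    (M : Matrix n n ℝ) : HasDerivAt (fun ε : ℝ => (1 + ε • M).det) M.trace 0 := by
  set q := (Matrix.det (1 + (X : ℝ[X]) • M.map C)).divX.divX
  have hq : HasDerivAt (fun ε => 1 + M.trace * ε + q.eval ε * ε ^ 2) M.trace 0 := by
    simpa using (((hasDerivAt_id (0:ℝ)).const_mul M.trace).const_add 1).fun_add
      ((q.hasDerivAt 0).fun_mul (hasDerivAt_pow 2 (0:ℝ)))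
  exact hq.congr_of_eventuallyEq (.of_forall fun ε => Matrix.det_one_add_smul ε M)

theorem eventually_mem_iff_of_notMem_frontier {X : Type*} [TopologicalSpace X]
    {s : Set X} {x : X} (hx : x ∉ frontier s) : ∀ᶠ y in 𝓝 x, (y ∈ s ↔ x ∈ s) := by
  by_cases hxs : x ∈ s
  · filter_upwards [mem_interior_iff_mem_nhds.1 ((mem_interior_iff_notMem_frontier hxs).2 hx)]
      with y hy using iff_of_true hy hxs
  · rw [← frontier_compl] at hx
    filter_upwards [mem_interior_iff_mem_nhds.1 ((mem_interior_iff_notMem_frontier hxs).2 hx)]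
      with y hy using iff_of_false hy hxs

variable {E : Type*} [NormedAddCommGroup E] [NormedSpace ℝ E]

section FiniteDimensional

variable [FiniteDimensional ℝ E]

theorem ContinuousLinearMap.hasDerivAt_det_id_add_smul (L : E →L[ℝ] E) :
    HasDerivAt (fun ε : ℝ => (ContinuousLinearMap.id ℝ E + ε • L).det)
      (LinearMap.trace ℝ E L) 0 := by
  classical
  let b := Module.finBasis ℝ E
  rw [LinearMap.trace_eq_matrix_trace ℝ b]
  convert (LinearMap.toMatrix b b L).hasDerivAt_det_one_add_smul using 1
  ext ε
  rw [ContinuousLinearMap.det, ← LinearMap.det_toMatrix b]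
  simp

theorem ContinuousLinearMap.contDiff_det {n : WithTop ℕ∞} :
    ContDiff ℝ n fun L : E →L[ℝ] E => L.det := by
  classical
  let b := Module.finBasis ℝ E
  let entry (i j : Fin (Module.finrank ℝ E)) : (E →L[ℝ] E) →L[ℝ] ℝ :=
    LinearMap.toContinuousLinearMap (Matrix.entryLinearMap ℝ ℝ i j ∘ₗ
      (LinearMap.toMatrix b b).toLinearMap ∘ₗ ContinuousLinearMap.coeLM ℝ)
  have : (fun L : E →L[ℝ] E => L.det) =
      fun L => ∑ σ : Equiv.Perm _, (Equiv.Perm.sign σ : ℝ) * ∏ i, entry (σ i) i L := by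
    ext L
    rw [ContinuousLinearMap.det, ← LinearMap.det_toMatrix b, Matrix.det_apply]
    simp [entry, Units.smul_def]
  rw [this]
  fun_prop

theorem ContinuousLinearMap.tendsto_one_sub_abs_det_id_add_smul_div (L : E →L[ℝ] E) :
    Tendsto (fun ε : ℝ => (1 - |(ContinuousLinearMap.id ℝ E + ε • L).det|) / ε)
      (𝓝[≠] 0) (𝓝 (-LinearMap.trace ℝ E L)) := by
  have hderiv := L.hasDerivAt_det_id_add_smul
  have hpos : ∀ᶠ ε in 𝓝[≠] (0 : ℝ), 0 < (ContinuousLinearMap.id ℝ E + ε • L).det :=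
    nhdsWithin_le_nhds <| hderiv.continuousAt.eventually <| lt_mem_nhds <| by simp
  refine (hasDerivAt_iff_tendsto_slope.1 hderiv).neg.congr' ?_
  filter_upwards [hpos] with ε hε
  rw [abs_of_pos hε, slope_def_field]
  simp only [zero_smul, add_zero, ContinuousLinearMap.det_id, sub_zero]
  ring

theorem ContinuousLinearMap.exists_abs_one_sub_abs_det_id_add_smul_div_le (R : ℝ) :
    ∃ C ≥ 0, ∀ L : E →L[ℝ] E, ‖L‖ ≤ R → ∀ ε : ℝ, |ε| ≤ 1 →
      |(1 - |(ContinuousLinearMap.id ℝ E + ε • L).det|) / ε| ≤ C := by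
  set I := ContinuousLinearMap.id ℝ E
  obtain ⟨K, hK⟩ := (contDiff_det (E := E) (n := 1)).locallyLipschitz.locallyLipschitzOn
    |>.exists_lipschitzOnWith_of_compact (isCompact_closedBall I R)
  refine ⟨K * |R|, by positivity, fun L hL ε hε => ?_⟩
  rcases eq_or_ne ε 0 with rfl | hε0
  · simpa using by positivity
  have hR : 0 ≤ R := (norm_nonneg L).trans hL
  have hεL : ‖ε • L‖ ≤ |ε| * R := by
    rw [norm_smul, Real.norm_eq_abs]
    exact mul_le_mul_of_nonneg_left hL (abs_nonneg ε)
  have hdist := hK.dist_le_mul (I + ε • L)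
    (by simpa [dist_eq_norm] using hεL.trans (mul_le_of_le_one_left hR hε)) I
    (mem_closedBall_self hR)
  rw [dist_eq_norm, dist_eq_norm, add_sub_cancel_left, ContinuousLinearMap.det_id] at hdist
  rw [abs_div, div_le_iff₀ (abs_pos.2 hε0)]
  calc abs (1 - |(I + ε • L).det|) = abs (|1| - |(I + ε • L).det|) := by rw [abs_one]
    _ ≤ |1 - (I + ε • L).det| := abs_abs_sub_abs_le_abs_sub _ _
    _ ≤ K * (|ε| * R) := by
      rw [abs_sub_comm]
      exact hdist.trans (mul_le_mul_of_nonneg_left hεL K.2)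
    _ = K * |R| * |ε| := by rw [abs_of_nonneg hR]; ring

end FiniteDimensional

theorem setOf_add_smul_mem_subset_closedBall {Ω : Set E} {r M ε : ℝ} {V : E → E}
    (hΩ : Ω ⊆ closedBall 0 r) (hV : ∀ x, ‖V x‖ ≤ M) (hε : |ε| ≤ 1) :
    {y | y + ε • V y ∈ Ω} ⊆ closedBall 0 (r + M) := by
  intro y hy
  have hshift : ‖ε • V y‖ ≤ M := by
    rw [norm_smul, Real.norm_eq_abs]
    exact (mul_le_of_le_one_left (norm_nonneg _) hε).trans (hV y)
  rw [mem_closedBall_zero_iff]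
  calc ‖y‖ = ‖(y + ε • V y) - ε • V y‖ := by rw [add_sub_cancel_right]
    _ ≤ ‖y + ε • V y‖ + ‖ε • V y‖ := norm_sub_le _ _
    _ ≤ r + M := add_le_add (mem_closedBall_zero_iff.1 (hΩ hy)) hshift

theorem tendsto_indicator_setOf_add_smul_mem {β : Type*} [Zero β] [TopologicalSpace β]
    {Ω : Set E} {x : E} (hx : x ∉ frontier Ω) (V : E → E) {f : ℝ → E → β} {g : E → β}
    (hf : Tendsto (fun ε => f ε x) (𝓝[≠] 0) (𝓝 (g x))) :
    Tendsto (fun ε => {y | y + ε • V y ∈ Ω}.indicator (f ε) x) (𝓝[≠] 0)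
      (𝓝 (Ω.indicator g x)) := by
  have hshift : Tendsto (fun ε : ℝ => x + ε • V x) (𝓝 0) (𝓝 x) := by
    have hcont : Continuous fun ε : ℝ => x + ε • V x := by fun_prop
    simpa using hcont.tendsto 0
  have hmem : ∀ᶠ ε in 𝓝[≠] (0 : ℝ), (x + ε • V x ∈ Ω ↔ x ∈ Ω) :=
    nhdsWithin_le_nhds (hshift.eventually (eventually_mem_iff_of_notMem_frontier hx))
  by_cases hxΩ : x ∈ Ω
  · rw [Set.indicator_of_mem hxΩ]
    refine hf.congr' ?_
    filter_upwards [hmem] with ε hε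
    exact (Set.indicator_of_mem (s := {y | y + ε • V y ∈ Ω}) (hε.2 hxΩ) _).symm
  · rw [Set.indicator_of_notMem hxΩ]
    refine tendsto_const_nhds.congr' ?_
    filter_upwards [hmem] with ε hε
    exact (Set.indicator_of_notMem (s := {y | y + ε • V y ∈ Ω}) (mt hε.1 hxΩ) _).symm

theorem tendsto_integral_one_sub_abs_det_id_add_smul_div [FiniteDimensional ℝ E]
    [MeasurableSpace E] [BorelSpace E] {μ : Measure E} [IsFiniteMeasureOnCompacts μ]
    {Ω : Set E} (hΩ : MeasurableSet Ω) (hΩ_bdd : Bornology.IsBounded Ω)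
    (hfrontier : μ (frontier Ω) = 0) {V : E → E} (hV : Continuous V)
    (hV_bdd : ∃ M, ∀ x, ‖V x‖ ≤ M) {A : E → E →L[ℝ] E} (hA : Continuous A)
    {h : E → ℝ} (hh : Continuous h) :
    Tendsto (fun ε : ℝ => (1 / ε) * ∫ x in {y | y + ε • V y ∈ Ω},
        h x * (1 - |(ContinuousLinearMap.id ℝ E + ε • A x).det|) ∂μ)
      (𝓝[≠] 0) (𝓝 (-∫ x in Ω, h x * LinearMap.trace ℝ E (A x) ∂μ)) := by
  obtain ⟨M, hM⟩ := hV_bdd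
  obtain ⟨r, hr⟩ := hΩ_bdd.subset_closedBall 0
  have hK : IsCompact (closedBall (0 : E) (r + M)) := isCompact_closedBall 0 (r + M)
  obtain ⟨R, hR⟩ := hK.exists_bound_of_continuousOn hA.continuousOn
  obtain ⟨C, hC0, hC⟩ :=
    ContinuousLinearMap.exists_abs_one_sub_abs_det_id_add_smul_div_le (E := E) R
  have hΩε : ∀ ε : ℝ, MeasurableSet {y | y + ε • V y ∈ Ω} := fun ε =>
    (continuous_id.add (hV.const_smul ε)).measurable hΩ
  simp_rw [← integral_const_mul, mul_left_comm _ (h _), one_div_mul_eq_div,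
    ← integral_indicator (hΩε _), ← integral_neg, ← integral_indicator hΩ]
  refine tendsto_integral_filter_of_dominated_convergence
    ((closedBall (0 : E) (r + M)).indicator fun x => C * ‖h x‖) ?_ ?_ ?_ ?_
  · refine .of_forall fun ε => (Continuous.aestronglyMeasurable ?_).indicator (hΩε ε)
    exact hh.mul <| (continuous_const.sub
      (ContinuousLinearMap.continuous_det.comp (by fun_prop)).abs).div_const ε
  · have hε_small : ∀ᶠ ε : ℝ in 𝓝[≠] 0, |ε| ≤ 1 :=
      nhdsWithin_le_nhds <| eventually_abs_sub_lt 0 one_pos |>.mono fun ε h => by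
        simpa using h.le
    filter_upwards [hε_small] with ε hε
    refine .of_forall fun x => ?_
    by_cases hx : x ∈ {y | y + ε • V y ∈ Ω}
    · have hxK := setOf_add_smul_mem_subset_closedBall hr hM hε hx
      rw [Set.indicator_of_mem hx, Set.indicator_of_mem hxK, norm_mul, mul_comm]
      exact mul_le_mul_of_nonneg_right (hC _ (hR x hxK) ε hε) (norm_nonneg _)
    · rw [Set.indicator_of_notMem hx, norm_zero]
      exact Set.indicator_nonneg (fun x _ => by positivity) x
  · exact ((continuous_const.mul hh.norm).continuousOn.integrableOn_compact hK)
      |>.integrable_indicator hK.measurableSet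
  · filter_upwards [measure_eq_zero_iff_ae_notMem.1 hfrontier] with x hx
    refine tendsto_indicator_setOf_add_smul_mem hx V ?_
    simpa only [mul_neg] using (A x).tendsto_one_sub_abs_det_id_add_smul_div.const_mul (h x)

/-- Volume-change integral limit (Jacobian term of the shape-derivative splitting). -/
theorem volume_change_integral_limit
    {d : ℕ} (Ω : Set (EuclideanSpace ℝ (Fin d)))
    (hΩ_open : IsOpen Ω) (hΩ_bdd : Bornology.IsBounded Ω)
    (hfrontier : volume (frontier Ω) = 0)
    (V : EuclideanSpace ℝ (Fin d) → EuclideanSpace ℝ (Fin d))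
    (hV : ContDiff ℝ 2 V) (hVbdd : ∃ M : ℝ, ∀ x, ‖V x‖ ≤ M)
    (h : EuclideanSpace ℝ (Fin d) → ℝ) (hh : Continuous h) :
    Tendsto (fun ε : ℝ =>
        (1 / ε) * ∫ x in {y | y + ε • V y ∈ Ω},
          h x * (1 - |ContinuousLinearMap.det
            (ContinuousLinearMap.id ℝ (EuclideanSpace ℝ (Fin d)) + ε • fderiv ℝ V x)|))
      (nhdsWithin 0 {0}ᶜ)
      (nhds (- ∫ x in Ω, h x * LinearMap.trace ℝ _ (fderiv ℝ V x).toLinearMap)) :=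
  tendsto_integral_one_sub_abs_det_id_add_smul_div hΩ_open.measurableSet hΩ_bdd hfrontier
    hV.continuous hVbdd (hV.continuous_fderiv (by norm_num)) hh
end

section
/- Space-argument integral limit of the shape-derivative splitting: Let Ω ⊆ ℝ^d be a bounded open set with λ^d(∂Ω) = 0, V : ℝ^d → ℝ^d an admissible distortion, ũ : ℝ^d → ℝ of class C², and ψ : ℝ^d × ℝ → ℝ of class C¹. Then lim_{ε→0} (1/ε) ∫_{Ω_ε} [ψ(x, ũ(T_ε(x))) − ψ(T_ε(x), ũ(T_ε(x)))] · |det(I_d + ε DV(x))| dλ^d(x) = − ∫_Ω ⟨∇_x ψ(x, ũ(x)), V(x)⟩ dλ^d(x), where ∇_x ψ denotes the gradient of ψ with respect to its first (vector) argument. -/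
/-!
Divided by `ε`, the integrand is minus a difference quotient of `ψ` in its first argument, taken
along `ε • V x` with the second argument frozen at `u (x + ε • V x)`. Since both endpoints move with
`ε`, strict differentiability of the `C¹` function `ψ` makes it converge to `-∂ₓψ (x, u x) (V x)`,
and the Jacobian factor tends to `1`. Because `x + ε • V x → x`, the indicator of the moving domain
converges to that of `Ω` off `∂Ω`, a null set. A Lipschitz bound for `ψ` on a compact set and a
bound for the Jacobian factor dominate everything by a constant on a fixed ball, so dominated
convergence applies.
-/

open Filter MeasureTheory RealInnerProductSpace Set Metric Asymptotics Topology

theorem tendsto_indicator_preimage_of_notMem_frontier {ι X M : Type*} [TopologicalSpace X]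
    [Zero M] [TopologicalSpace M] {l : Filter ι} {Ω : Set X} (hΩ : IsOpen Ω)
    {T : ι → X → X} {f : ι → X → M} {g : X → M} {x : X} (hx : x ∉ frontier Ω)
    (hT : Tendsto (fun i => T i x) l (𝓝 x)) (hfg : x ∈ Ω → Tendsto (fun i => f i x) l (𝓝 (g x))) :
    Tendsto (fun i => {y | T i y ∈ Ω}.indicator (f i) x) l (𝓝 (Ω.indicator g x)) := by
  by_cases hxΩ : x ∈ Ω
  · rw [indicator_of_mem hxΩ]
    refine (hfg hxΩ).congr' ?_
    filter_upwards [hT (hΩ.mem_nhds hxΩ)] with i hi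
    exact (indicator_of_mem (show x ∈ {y | T i y ∈ Ω} from hi) _).symm
  · have hxcl : x ∉ closure Ω := fun h => hx ⟨h, by rwa [hΩ.interior_eq]⟩
    rw [indicator_of_notMem hxΩ]
    refine tendsto_const_nhds.congr' ?_
    filter_upwards [hT (isClosed_closure.isOpen_compl.mem_nhds hxcl)] with i hi
    exact (indicator_of_notMem (s := {y | T i y ∈ Ω}) (fun h => hi (subset_closure h)) (f i)).symm

theorem tendsto_setIntegral_preimage_of_dominated {ι X G : Type*} [TopologicalSpace X]
    [MeasurableSpace X] [OpensMeasurableSpace X] [NormedAddCommGroup G] [NormedSpace ℝ G]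
    {μ : Measure X} {l : Filter ι} [l.IsCountablyGenerated] {Ω : Set X} (hΩ : IsOpen Ω)
    (hfr : μ (frontier Ω) = 0) {T : ι → X → X} (hT : ∀ x, Tendsto (fun i => T i x) l (𝓝 x))
    (hTm : ∀ i, MeasurableSet {x | T i x ∈ Ω}) {f : ι → X → G} {g : X → G} (bound : X → ℝ)
    (hf_meas : ∀ᶠ i in l, AEStronglyMeasurable (f i) (μ.restrict {x | T i x ∈ Ω}))
    (h_bound : ∀ᶠ i in l, ∀ x, T i x ∈ Ω → ‖f i x‖ ≤ bound x)
    (bound_integrable : Integrable bound μ)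
    (h_lim : ∀ x ∈ Ω, Tendsto (fun i => f i x) l (𝓝 (g x))) :
    Tendsto (fun i => ∫ x in {x | T i x ∈ Ω}, f i x ∂μ) l (𝓝 (∫ x in Ω, g x ∂μ)) := by
  simp_rw [← integral_indicator (hTm _), ← integral_indicator hΩ.measurableSet]
  refine tendsto_integral_filter_of_dominated_convergence (fun x => ‖bound x‖) ?_ ?_
    bound_integrable.norm ?_
  · filter_upwards [hf_meas] with i hi
    exact (aestronglyMeasurable_indicator_iff (hTm i)).2 hi
  · filter_upwards [h_bound] with i hi
    refine ae_of_all _ fun x => ?_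
    by_cases hx : T i x ∈ Ω
    · rw [indicator_of_mem (show x ∈ {x | T i x ∈ Ω} from hx)]
      exact (hi x hx).trans (le_abs_self _)
    · rw [indicator_of_notMem (show x ∉ {x | T i x ∈ Ω} from hx), norm_zero]
      exact norm_nonneg _
  · filter_upwards [measure_eq_zero_iff_ae_notMem.1 hfr] with x hx
    exact tendsto_indicator_preimage_of_notMem_frontier hΩ hx (hT x) (h_lim x)

theorem tendsto_add_smul_nhds_zero {E : Type*} [NormedAddCommGroup E] [NormedSpace ℝ E]
    (x v : E) : Tendsto (fun ε : ℝ => x + ε • v) (𝓝 0) (𝓝 x) :=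
  (by fun_prop : Continuous fun ε : ℝ => x + ε • v).tendsto' 0 x (by simp)

theorem HasStrictFDerivAt.tendsto_inv_smul_sub {E F : Type*} [NormedAddCommGroup E]
    [NormedSpace ℝ E] [NormedAddCommGroup F] [NormedSpace ℝ F] {f : E → F} {f' : E →L[ℝ] F}
    {a : E} (hf : HasStrictFDerivAt f f' a) {b : ℝ → E} (hb : Tendsto b (𝓝[≠] 0) (𝓝 a)) (v : E) :
    Tendsto (fun ε : ℝ => ε⁻¹ • (f (b ε + ε • v) - f (b ε))) (𝓝[≠] 0) (𝓝 (f' v)) := by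
  have hεv : Tendsto (fun ε : ℝ => ε • v) (𝓝[≠] 0) (𝓝 0) := by
    simpa using (tendsto_add_smul_nhds_zero 0 v).mono_left nhdsWithin_le_nhds
  have hpair : Tendsto (fun ε : ℝ => (b ε + ε • v, b ε)) (𝓝[≠] 0) (𝓝 (a, a)) := by
    simpa using (hb.add hεv).prodMk_nhds hb
  have hsmall : (fun ε : ℝ => f (b ε + ε • v) - f (b ε) - ε • f' v) =o[𝓝[≠] 0] fun ε => ε := by
    refine ((hf.isLittleO.comp_tendsto hpair).trans_isBigO ?_).congr_left fun ε => ?_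
    · exact isBigO_iff.2 ⟨‖v‖, Eventually.of_forall fun ε => by simp [norm_smul, mul_comm]⟩
    · simp
  have := (hsmall.tendsto_inv_smul_nhds_zero).add_const (f' v)
  rw [zero_add] at this
  refine this.congr' ?_
  filter_upwards [self_mem_nhdsWithin] with ε (hε : ε ≠ 0)
  rw [smul_sub, smul_smul, inv_mul_cancel₀ hε, one_smul, sub_add_cancel]

theorem tendsto_abs_det_id_add_smul {E : Type*} [NormedAddCommGroup E] [NormedSpace ℝ E]
    (A : E →L[ℝ] E) :
    Tendsto (fun ε : ℝ => |(ContinuousLinearMap.id ℝ E + ε • A).det|) (𝓝 0) (𝓝 1) := by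
  have hc : Continuous fun ε : ℝ => |(ContinuousLinearMap.id ℝ E + ε • A).det| :=
    continuous_abs.comp (ContinuousLinearMap.continuous_det.comp (by fun_prop))
  simpa [ContinuousLinearMap.det] using hc.tendsto 0

theorem inner_gradient_comp_prodMk_left {E F : Type*} [NormedAddCommGroup E]
    [InnerProductSpace ℝ E] [CompleteSpace E] [NormedAddCommGroup F] [NormedSpace ℝ F]
    {ψ : E × F → ℝ} {x : E} {c : F} (hψ : DifferentiableAt ℝ ψ (x, c)) (v : E) :
    ⟪gradient (fun y => ψ (y, c)) x, v⟫ = fderiv ℝ ψ (x, c) (v, 0) := by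
  have hd : HasFDerivAt (fun y => ψ (y, c))
      ((fderiv ℝ ψ (x, c)).comp ((ContinuousLinearMap.id ℝ E).prod 0)) x :=
    hψ.hasFDerivAt.comp x ((hasFDerivAt_id x).prodMk (hasFDerivAt_const c x))
  rw [gradient, InnerProductSpace.toDual_symm_apply, hd.fderiv]
  simp

section Splitting

variable {E : Type*} [NormedAddCommGroup E] [NormedSpace ℝ E]

noncomputable def splitIntegrand (V : E → E) (u : E → ℝ) (ψ : E × ℝ → ℝ) (ε : ℝ) (x : E) : ℝ :=
  (ψ (x, u (x + ε • V x)) - ψ (x + ε • V x, u (x + ε • V x))) *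
    |(ContinuousLinearMap.id ℝ E + ε • fderiv ℝ V x).det|

variable {V : E → E} {u : E → ℝ} {ψ : E × ℝ → ℝ}

theorem continuous_splitIntegrand (hV : ContDiff ℝ 1 V) (hu : Continuous u) (hψ : Continuous ψ)
    (ε : ℝ) : Continuous (splitIntegrand V u ψ ε) := by
  have hT : Continuous fun x => x + ε • V x := by fun_prop
  have hDV := hV.continuous_fderiv one_ne_zero
  exact ((hψ.comp (continuous_id.prodMk (hu.comp hT))).sub
      (hψ.comp (hT.prodMk (hu.comp hT)))).mul
    (continuous_abs.comp (ContinuousLinearMap.continuous_det.comp (by fun_prop)))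

theorem tendsto_inv_mul_splitIntegrand {ψ' : E × ℝ →L[ℝ] ℝ} {x : E}
    (hψ : HasStrictFDerivAt ψ ψ' (x, u x)) (hu : ContinuousAt u x) :
    Tendsto (fun ε => (1 / ε) * splitIntegrand V u ψ ε x) (𝓝[≠] 0) (𝓝 (-ψ' (V x, 0))) := by
  have hb : Tendsto (fun ε : ℝ => (x, u (x + ε • V x))) (𝓝[≠] 0) (𝓝 (x, u x)) :=
    (tendsto_const_nhds.prodMk_nhds (hu.tendsto.comp (tendsto_add_smul_nhds_zero x (V x)))
      ).mono_left nhdsWithin_le_nhds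
  have hdet := (tendsto_abs_det_id_add_smul (fderiv ℝ V x)).mono_left
    (nhdsWithin_le_nhds (s := {0}ᶜ))
  have := (hψ.tendsto_inv_smul_sub hb (V x, 0)).neg.mul hdet
  rw [mul_one] at this
  refine this.congr fun ε => ?_
  simp only [splitIntegrand, Prod.smul_mk, smul_eq_mul, mul_zero, Prod.mk_add_mk, add_zero]
  ring

theorem norm_le_of_norm_add_smul_le {x v : E} {ε R M : ℝ} (hx : ‖x + ε • v‖ ≤ R) (hε : ‖ε‖ ≤ 1)
    (hv : ‖v‖ ≤ M) : ‖x‖ ≤ R + M :=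
  calc ‖x‖ = ‖(x + ε • v) - ε • v‖ := by rw [add_sub_cancel_right]
    _ ≤ ‖x + ε • v‖ + ‖ε‖ * ‖v‖ := (norm_sub_le _ _).trans_eq (by rw [norm_smul])
    _ ≤ R + 1 * M := by gcongr
    _ = R + M := by rw [one_mul]

theorem exists_norm_inv_mul_splitIntegrand_le [FiniteDimensional ℝ E] {M : ℝ}
    (hV : ContDiff ℝ 1 V) (hM : ∀ x, ‖V x‖ ≤ M) (hu : Continuous u) (hψ : ContDiff ℝ 1 ψ)
    (R : ℝ) : ∃ C, ∀ ε : ℝ, ‖ε‖ ≤ 1 → ∀ x, ‖x + ε • V x‖ ≤ R →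
      ‖(1 / ε) * splitIntegrand V u ψ ε x‖ ≤ C := by
  obtain ⟨L, hL⟩ := hψ.locallyLipschitz.locallyLipschitzOn.exists_lipschitzOnWith_of_compact
    ((isCompact_closedBall (0 : E) (R + M)).prod ((isCompact_closedBall (0 : E) R).image hu))
  have hDV := hV.continuous_fderiv one_ne_zero
  obtain ⟨D, hD⟩ := (isCompact_closedBall (0 : ℝ) 1 |>.prod (isCompact_closedBall (0 : E) (R + M))
    ).exists_bound_of_continuousOn (f := fun p : ℝ × E =>
      |(ContinuousLinearMap.id ℝ E + p.1 • fderiv ℝ V p.2).det|)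
    (continuous_abs.comp (ContinuousLinearMap.continuous_det.comp (by fun_prop))).continuousOn
  refine ⟨L * M * D, fun ε hε x hx => ?_⟩
  have hxR : ‖x‖ ≤ R + M := norm_le_of_norm_add_smul_le hx hε (hM x)
  have hM0 : 0 ≤ M := (norm_nonneg _).trans (hM x)
  set w := u (x + ε • V x)
  have hw : w ∈ u '' closedBall 0 R := mem_image_of_mem u (mem_closedBall_zero_iff.2 hx)
  have hψdiff : |ψ (x, w) - ψ (x + ε • V x, w)| ≤ L * (‖ε‖ * M) := by
    have := hL.dist_le_mul (x, w) ⟨mem_closedBall_zero_iff.2 hxR, hw⟩ (x + ε • V x, w)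
      ⟨mem_closedBall_zero_iff.2 (hx.trans (by linarith)), hw⟩
    have hdist : dist (x, w) (x + ε • V x, w) = ‖ε‖ * ‖V x‖ := by
      rw [Prod.dist_eq, dist_self, dist_eq_norm, sub_add_cancel_left, norm_neg, norm_smul,
        max_eq_left (by positivity)]
    rw [← Real.dist_eq]
    exact this.trans (by rw [hdist]; gcongr; exact hM x)
  have hdet : |(ContinuousLinearMap.id ℝ E + ε • fderiv ℝ V x).det| ≤ D :=
    (le_abs_self _).trans (hD (ε, x) ⟨mem_closedBall_zero_iff.2 hε, mem_closedBall_zero_iff.2 hxR⟩)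
  calc ‖(1 / ε) * splitIntegrand V u ψ ε x‖
      = ‖ε‖⁻¹ * |ψ (x, w) - ψ (x + ε • V x, w)| *
          |(ContinuousLinearMap.id ℝ E + ε • fderiv ℝ V x).det| := by
        simp [splitIntegrand, w, mul_assoc]
    _ ≤ ‖ε‖⁻¹ * (L * (‖ε‖ * M)) * D := by gcongr
    _ = (‖ε‖⁻¹ * ‖ε‖) * (L * M * D) := by ring
    _ ≤ L * M * D := by
        refine mul_le_of_le_one_left ?_ (inv_mul_le_one_of_le₀ le_rfl (norm_nonneg _))
        have : 0 ≤ D := (abs_nonneg _).trans hdet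
        positivity

end Splitting

/-- Space-argument integral limit of the shape-derivative splitting. -/
theorem space_argument_integral_limit
    {d : ℕ} (Ω : Set (EuclideanSpace ℝ (Fin d)))
    (hΩ_open : IsOpen Ω) (hΩ_bdd : Bornology.IsBounded Ω)
    (hfrontier : volume (frontier Ω) = 0)
    (V : EuclideanSpace ℝ (Fin d) → EuclideanSpace ℝ (Fin d))
    (hV : ContDiff ℝ 2 V) (hVbdd : ∃ M : ℝ, ∀ x, ‖V x‖ ≤ M)
    (u : EuclideanSpace ℝ (Fin d) → ℝ) (hu : ContDiff ℝ 2 u)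
    (ψ : EuclideanSpace ℝ (Fin d) × ℝ → ℝ) (hψ : ContDiff ℝ 1 ψ) :
    Tendsto (fun ε : ℝ =>
        (1 / ε) * ∫ x in {y | y + ε • V y ∈ Ω},
          (ψ (x, u (x + ε • V x)) - ψ (x + ε • V x, u (x + ε • V x))) *
            |ContinuousLinearMap.det
              (ContinuousLinearMap.id ℝ (EuclideanSpace ℝ (Fin d)) + ε • fderiv ℝ V x)|)
      (nhdsWithin 0 {0}ᶜ)
      (nhds (- ∫ x in Ω, ⟪gradient (fun y => ψ (y, u x)) x, V x⟫)) := by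
  obtain ⟨M, hM⟩ := hVbdd
  obtain ⟨R, hΩR⟩ := hΩ_bdd.subset_closedBall 0
  have hV1 : ContDiff ℝ 1 V := hV.of_le one_le_two
  obtain ⟨C, hC⟩ := exists_norm_inv_mul_splitIntegrand_le hV1 hM hu.continuous hψ R
  have hT : ∀ ε : ℝ, Continuous fun x => x + ε • V x := fun ε => by
    have := hV1.continuous; fun_prop
  have hbound : ∀ᶠ ε : ℝ in 𝓝[≠] 0, ∀ x, x + ε • V x ∈ Ω →
      ‖(1 / ε) * splitIntegrand V u ψ ε x‖ ≤ (closedBall 0 (R + M)).indicator (fun _ => C) x := by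
    filter_upwards [mem_nhdsWithin_of_mem_nhds (closedBall_mem_nhds (0 : ℝ) one_pos)] with ε hε x hx
    have hx' := mem_closedBall_zero_iff.1 (hΩR hx)
    rw [indicator_of_mem (mem_closedBall_zero_iff.2 (norm_le_of_norm_add_smul_le hx'
      (mem_closedBall_zero_iff.1 hε) (hM x)))]
    exact hC ε (mem_closedBall_zero_iff.1 hε) x hx'
  have hlim := tendsto_setIntegral_preimage_of_dominated (μ := volume) hΩ_open hfrontier
    (fun x => (tendsto_add_smul_nhds_zero x (V x)).mono_left nhdsWithin_le_nhds)
    (fun ε => (hΩ_open.preimage (hT ε)).measurableSet)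
    ((closedBall 0 (R + M)).indicator fun _ => C)
    (Eventually.of_forall fun ε => ((continuous_splitIntegrand hV1 hu.continuous hψ.continuous ε
      ).const_mul _).aestronglyMeasurable)
    hbound ((integrableOn_const measure_closedBall_lt_top.ne).integrable_indicator
      measurableSet_closedBall)
    (g := fun x => -⟪gradient (fun y => ψ (y, u x)) x, V x⟫) (fun x _ => by
      rw [inner_gradient_comp_prodMk_left (hψ.differentiable one_ne_zero _)]
      exact tendsto_inv_mul_splitIntegrand (hψ.hasStrictFDerivAt one_ne_zero)
        hu.continuous.continuousAt)
  simp only [integral_const_mul, integral_neg] at hlim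
  exact hlim
end

section
/- First-summand integral limit of the shape-derivative splitting: Let Ω ⊆ ℝ^d be a bounded open set with λ^d(∂Ω) = 0, V : ℝ^d → ℝ^d an admissible distortion, ũ : ℝ^d → ℝ of class C², w : ℝ^d → ℝ continuous, ψ : ℝ^d × ℝ → ℝ of class C¹, ε₀ > 0, and for each ε ∈ [−ε₀, ε₀] \ {0} let u_ε : ℝ^d → ℝ be Borel measurable. Assume (i) there is C ≥ 0 such that sup_{x ∈ Ω_ε} |u_ε(x) − ũ(x)| ≤ C|ε| for all such ε, and (ii) sup_{x ∈ Ω ∩ Ω_ε} |(1/ε)(u_ε(x) − ũ(x)) − w(x)| → 0 as ε → 0. Then lim_{ε→0} (1/ε) ∫_{Ω_ε} [ψ(x, u_ε(x)) − ψ(x, ũ(x))] dλ^d(x) = ∫_Ω ∂_u ψ(x, ũ(x)) · w(x) dλ^d(x), where ∂_u ψ denotes the partial derivative of ψ with respect to its second (scalar) argument. -/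
/-!
Split `Ω_ε` as `(Ω ∩ Ω_ε) ∪ (Ω_ε \ Ω)` and `Ω` as `(Ω ∩ Ω_ε) ∪ (Ω \ Ω_ε)`. All points `(x, ũ x)` and
`(x, u_ε x)` with `x ∈ Ω_ε` lie in one compact convex set on which `Dψ` is bounded and uniformly
continuous. Hence the difference quotients `(ψ(x, u_ε) - ψ(x, ũ)) / ε` are uniformly bounded on
`Ω_ε`, and on `Ω ∩ Ω_ε` a uniform first-order Taylor expansion in the second variable together with
the uniform convergence `(u_ε - ũ) / ε → w` makes them converge uniformly to `∂ᵤψ(x, ũ) w`. The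
symmetric difference `Ω_ε ∆ Ω` lies in the `|ε| sup ‖V‖`-neighbourhood of `∂Ω`, whose measure tends
to `λ(∂Ω) = 0`, so the bounded integrands contribute nothing there in the limit.
-/

open Filter MeasureTheory Set Metric Topology
open scoped symmDiff ENNReal

theorem IsPreconnected.inter_frontier_nonempty {α : Type*} [TopologicalSpace α] {s t : Set α}
    (hs : IsPreconnected s) (hst : (s ∩ t).Nonempty) (hs't : (s \ t).Nonempty) :
    (s ∩ frontier t).Nonempty := by
  by_contra h
  have hcover : s ⊆ interior t ∪ (closure t)ᶜ := fun x hx => by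
    by_contra hx'
    simp only [mem_union, mem_compl_iff, not_or, not_not] at hx'
    exact h ⟨x, hx, hx'.2, hx'.1⟩
  rcases hs.subset_or_subset isOpen_interior isClosed_closure.isOpen_compl
    (disjoint_compl_right_iff_subset.2 interior_subset_closure) hcover with h | h
  · obtain ⟨x, hxs, hxt⟩ := hs't
    exact hxt (interior_subset (h hxs))
  · obtain ⟨x, hxs, hxt⟩ := hst
    exact h hxs (subset_closure hxt)

section Shift

variable {E : Type*} [NormedAddCommGroup E] [NormedSpace ℝ E] {Ω : Set E} {V : E → E} {M : ℝ}

theorem preimage_shift_subset_cthickening (hM : ∀ x, ‖V x‖ ≤ M) {ε r : ℝ} (hε : |ε| ≤ r) :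
    {y | y + ε • V y ∈ Ω} ⊆ cthickening (r * M) Ω := fun x hx =>
  mem_cthickening_of_dist_le x _ _ _ hx <| by
    rw [dist_self_add_right, norm_smul, Real.norm_eq_abs]
    exact mul_le_mul hε (hM x) (norm_nonneg _) ((abs_nonneg ε).trans hε)

theorem symmDiff_preimage_shift_subset_cthickening (hM : ∀ x, ‖V x‖ ≤ M) (ε : ℝ) :
    {y | y + ε • V y ∈ Ω} ∆ Ω ⊆ cthickening (|ε| * M) (frontier Ω) := by
  intro x hx
  have hstep : ‖ε • V x‖ ≤ |ε| * M := by
    rw [norm_smul, Real.norm_eq_abs]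
    exact mul_le_mul_of_nonneg_left (hM x) (abs_nonneg ε)
  have hseg : segment ℝ x (x + ε • V x) ⊆ closedBall x (|ε| * M) :=
    (convex_closedBall _ _).segment_subset (mem_closedBall_self ((norm_nonneg _).trans hstep))
      (by rwa [mem_closedBall, dist_self_add_left])
  obtain ⟨z, hz_seg, hz⟩ : (segment ℝ x (x + ε • V x) ∩ frontier Ω).Nonempty := by
    apply (convex_segment _ _).isPreconnected.inter_frontier_nonempty
    · rcases hx with ⟨hin, -⟩ | ⟨hin, -⟩
      exacts [⟨_, right_mem_segment _ _ _, hin⟩, ⟨_, left_mem_segment _ _ _, hin⟩]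
    · rcases hx with ⟨-, hout⟩ | ⟨-, hout⟩
      exacts [⟨_, left_mem_segment _ _ _, hout⟩, ⟨_, right_mem_segment _ _ _, hout⟩]
  exact mem_cthickening_of_dist_le x z _ _ hz (dist_comm x z ▸ hseg hz_seg)

theorem tendsto_measure_symmDiff_preimage_shift [MeasurableSpace E] [OpensMeasurableSpace E]
    [ProperSpace E] {μ : Measure E} [IsFiniteMeasureOnCompacts μ]
    (hΩ : IsCompact (frontier Ω)) (hΩ0 : μ (frontier Ω) = 0) (hM : ∀ x, ‖V x‖ ≤ M) :
    Tendsto (fun ε : ℝ => μ ({y | y + ε • V y ∈ Ω} ∆ Ω)) (𝓝 0) (𝓝 0) := by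
  have hthick : Tendsto (fun ε : ℝ => μ (cthickening (|ε| * M) (frontier Ω))) (𝓝 0) (𝓝 0) := by
    rw [← hΩ0]
    refine (tendsto_measure_cthickening_of_isCompact hΩ).comp ?_
    simpa using (show Continuous fun ε : ℝ => |ε| * M by fun_prop).tendsto 0
  exact tendsto_of_tendsto_of_tendsto_of_le_of_le tendsto_const_nhds hthick (fun _ => zero_le)
    fun ε => measure_mono (symmDiff_preimage_shift_subset_cthickening hM ε)

end Shift

section Calculus

variable {E F : Type*} [NormedAddCommGroup E] [NormedSpace ℝ E] [NormedAddCommGroup F]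
  [NormedSpace ℝ F]

theorem exists_norm_image_sub_sub_fderiv_le {f : E → F} (hf : ContDiff ℝ 1 f) {S : Set E}
    (hS : IsCompact S) (hSc : Convex ℝ S) {η : ℝ} (hη : 0 < η) :
    ∃ δ > 0, ∀ p ∈ S, ∀ q ∈ S, ‖q - p‖ < δ →
      ‖f q - f p - fderiv ℝ f p (q - p)‖ ≤ η * ‖q - p‖ := by
  obtain ⟨δ, hδ, hfδ⟩ := Metric.uniformContinuousOn_iff.1
    (hS.uniformContinuousOn_of_continuous (hf.continuous_fderiv one_ne_zero).continuousOn) η hη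
  refine ⟨δ, hδ, fun p hp q hq hpq => ?_⟩
  refine (hSc.inter (convex_ball p δ)).norm_image_sub_le_of_norm_hasFDerivWithin_le'
    (fun z _ => (hf.differentiable one_ne_zero z).hasFDerivAt.hasFDerivWithinAt)
    (fun z hz => ?_) ⟨hp, mem_ball_self hδ⟩ ⟨hq, by rwa [mem_ball, dist_eq_norm]⟩
  rw [← dist_eq_norm]
  exact (hfδ z hz.1 p hp hz.2).le

theorem deriv_apply_mk_right {ψ : E × ℝ → F} (hψ : Differentiable ℝ ψ) (x : E) (t : ℝ) :
    deriv (fun v => ψ (x, v)) t = fderiv ℝ ψ (x, t) (0, 1) :=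
  ((hψ (x, t)).hasFDerivAt.comp_hasDerivAt t
    ((hasDerivAt_const t x).prodMk (hasDerivAt_id t))).deriv

theorem map_mk_sub_mk_right (φ : E × ℝ →L[ℝ] F) (x : E) (a b : ℝ) :
    φ ((x, b) - (x, a)) = (b - a) • φ (0, 1) := by
  rw [← map_smul]
  simp

end Calculus

theorem norm_mk_sub_mk_right {E : Type*} [SeminormedAddCommGroup E] (x : E) (a b : ℝ) :
    ‖((x, b) : E × ℝ) - (x, a)‖ = |b - a| := by
  simp [Prod.norm_def]

theorem abs_one_div_mul_le_of_abs_le {ε c C : ℝ} (hε : ε ≠ 0) (h : |c| ≤ C * |ε|) :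
    |1 / ε| * |c| ≤ C := by
  rwa [abs_div, abs_one, div_mul_eq_mul_div, one_mul, div_le_iff₀ (abs_pos.2 hε)]

section DifferenceQuotient

variable {E : Type*} [NormedAddCommGroup E] [NormedSpace ℝ E] {ψ : E × ℝ → ℝ}
  {S : Set (E × ℝ)} {T : ℝ → Set E} {a : E → ℝ} {b : ℝ → E → ℝ} {C : ℝ}

theorem exists_eventually_abs_diffQuot_le (hψ : ContDiff ℝ 1 ψ) (hS : IsCompact S)
    (hSc : Convex ℝ S) (hmem : ∀ᶠ ε in 𝓝[≠] 0, ∀ x ∈ T ε, (x, a x) ∈ S ∧ (x, b ε x) ∈ S)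
    (hC : ∀ᶠ ε in 𝓝[≠] 0, ∀ x ∈ T ε, |b ε x - a x| ≤ C * |ε|) :
    ∃ B, ∀ᶠ ε in 𝓝[≠] 0, ∀ x ∈ T ε, |1 / ε * (ψ (x, b ε x) - ψ (x, a x))| ≤ B := by
  obtain ⟨L, hL⟩ := hS.exists_bound_of_continuousOn (hψ.continuous_fderiv one_ne_zero).continuousOn
  refine ⟨|L| * C, ?_⟩
  filter_upwards [hmem, hC, self_mem_nhdsWithin] with ε hmem hC hε x hx
  obtain ⟨hp, hq⟩ := hmem x hx
  have hlip := hSc.norm_image_sub_le_of_norm_fderiv_le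
    (fun z _ => hψ.differentiable one_ne_zero z)
    (fun z hz => (hL z hz).trans (le_abs_self L)) hp hq
  rw [norm_mk_sub_mk_right, Real.norm_eq_abs] at hlip
  calc |1 / ε * (ψ (x, b ε x) - ψ (x, a x))| ≤ |1 / ε| * (|L| * |b ε x - a x|) := by
        rw [abs_mul]; gcongr
    _ = |L| * (|1 / ε| * |b ε x - a x|) := by ring
    _ ≤ |L| * C := by gcongr; exact abs_one_div_mul_le_of_abs_le hε (hC x hx)

theorem eventually_abs_diffQuot_sub_le (hψ : ContDiff ℝ 1 ψ) (hS : IsCompact S)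
    (hSc : Convex ℝ S) (hmem : ∀ᶠ ε in 𝓝[≠] 0, ∀ x ∈ T ε, (x, a x) ∈ S ∧ (x, b ε x) ∈ S)
    (hC : ∀ᶠ ε in 𝓝[≠] 0, ∀ x ∈ T ε, |b ε x - a x| ≤ C * |ε|) {w : E → ℝ}
    (hw : ∀ η > 0, ∀ᶠ ε in 𝓝[≠] 0, ∀ x ∈ T ε, |1 / ε * (b ε x - a x) - w x| ≤ η)
    {η : ℝ} (hη : 0 < η) :
    ∀ᶠ ε in 𝓝[≠] 0, ∀ x ∈ T ε,
      |1 / ε * (ψ (x, b ε x) - ψ (x, a x)) - fderiv ℝ ψ (x, a x) (0, 1) * w x| ≤ η := by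
  obtain ⟨L, hL⟩ := hS.exists_bound_of_continuousOn (hψ.continuous_fderiv one_ne_zero).continuousOn
  set η₁ := η / (|C| + |L| + 1)
  have hη₁ : 0 < η₁ := by positivity
  obtain ⟨δ, hδ, hδψ⟩ := exists_norm_image_sub_sub_fderiv_le hψ hS hSc hη₁
  have hsmall : ∀ᶠ ε in 𝓝[≠] (0 : ℝ), C * |ε| < δ := nhdsWithin_le_nhds <|
    ((show Continuous fun ε : ℝ => C * |ε| by fun_prop).tendsto' 0 0 (by simp)).eventually
      (gt_mem_nhds hδ)
  filter_upwards [hmem, hC, hw η₁ hη₁, hsmall, self_mem_nhdsWithin] with ε hmem hC hw hsmall hε x hx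
  obtain ⟨hp, hq⟩ := hmem x hx
  have hrem := hδψ _ hp _ hq (by rw [norm_mk_sub_mk_right]; exact (hC x hx).trans_lt hsmall)
  rw [map_mk_sub_mk_right, norm_mk_sub_mk_right, Real.norm_eq_abs, smul_eq_mul] at hrem
  set g := fderiv ℝ ψ (x, a x) (0, 1)
  have hg : |g| ≤ |L| := by
    refine ((fderiv ℝ ψ (x, a x)).le_opNorm _).trans ?_
    simpa [Prod.norm_def] using (hL _ hp).trans (le_abs_self L)
  calc |1 / ε * (ψ (x, b ε x) - ψ (x, a x)) - g * w x|
      = |1 / ε * (ψ (x, b ε x) - ψ (x, a x) - (b ε x - a x) * g)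
          + g * (1 / ε * (b ε x - a x) - w x)| := by ring_nf
    _ ≤ |1 / ε| * (η₁ * |b ε x - a x|) + |L| * η₁ := by
        refine (abs_add_le _ _).trans ?_
        rw [abs_mul, abs_mul]
        gcongr
        exact hw x hx
    _ = η₁ * (|1 / ε| * |b ε x - a x|) + |L| * η₁ := by ring
    _ ≤ η₁ * |C| + |L| * η₁ := by
        gcongr
        exact (abs_one_div_mul_le_of_abs_le hε (hC x hx)).trans (le_abs_self C)
    _ ≤ η := by
        have : η₁ * (|C| + |L| + 1) = η := div_mul_cancel₀ η (by positivity)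
        nlinarith

end DifferenceQuotient

theorem exists_isCompact_convex_mem_of_abs_sub_le {E : Type*} [NormedAddCommGroup E]
    [NormedSpace ℝ E] [ProperSpace E] {K : Set E} (hK : Bornology.IsBounded K) {f : E → ℝ}
    (hf : Continuous f) (r : ℝ) :
    ∃ S : Set (E × ℝ), IsCompact S ∧ Convex ℝ S ∧ ∀ x ∈ K, ∀ v, |v - f x| ≤ r → (x, v) ∈ S := by
  obtain ⟨R, hR⟩ := hK.subset_closedBall 0
  obtain ⟨A, hA⟩ := (isCompact_closedBall (0 : E) R).exists_bound_of_continuousOn hf.continuousOn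
  refine ⟨closedBall 0 R ×ˢ Icc (-(A + r)) (A + r), (isCompact_closedBall _ _).prod isCompact_Icc,
    (convex_closedBall _ _).prod (convex_Icc _ _), fun x hx v hv => ⟨hR hx, ?_⟩⟩
  have hfx := abs_le.1 (hA x (hR hx))
  have hv := abs_le.1 hv
  constructor <;> linarith [hfx.1, hfx.2, hv.1, hv.2]

theorem eventually_nhdsNE_zero_of_abs_lt {P : ℝ → Prop} {δ : ℝ} (hδ : 0 < δ)
    (h : ∀ ε, 0 < |ε| → |ε| < δ → P ε) : ∀ᶠ ε in 𝓝[≠] 0, P ε :=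
  eventually_nhdsWithin_iff.2 <| Metric.eventually_nhds_iff.2
    ⟨δ, hδ, fun ε hεδ hε0 => h ε (abs_pos.2 hε0) (by rwa [Real.dist_eq, sub_zero] at hεδ)⟩

section SetIntegral

variable {α : Type*} [MeasurableSpace α] {μ : Measure α}

theorem dist_setIntegral_le_of_abs_sub_le {s t : Set α} {f F : α → ℝ} {B η : ℝ} (hη : 0 ≤ η)
    (hs : MeasurableSet s) (ht : MeasurableSet t) (hμs : μ s ≠ ∞) (hμt : μ t ≠ ∞)
    (hf : AEStronglyMeasurable f (μ.restrict s)) (hF : AEStronglyMeasurable F (μ.restrict t))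
    (hfB : ∀ x ∈ s, |f x| ≤ B) (hFB : ∀ x ∈ t, |F x| ≤ B)
    (hfF : ∀ x ∈ t ∩ s, |f x - F x| ≤ η) :
    dist (∫ x in s, f x ∂μ) (∫ x in t, F x ∂μ) ≤ η * μ.real t + B * μ.real (s ∆ t) := by
  have hfi : IntegrableOn f s μ :=
    .of_bound hμs.lt_top hf B (ae_restrict_of_forall_mem hs hfB)
  have hFi : IntegrableOn F t μ :=
    .of_bound hμt.lt_top hF B (ae_restrict_of_forall_mem ht hFB)
  have hcommon : ‖∫ x in t ∩ s, (f x - F x) ∂μ‖ ≤ η * μ.real t :=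
    (norm_setIntegral_le_of_norm_le_const (measure_lt_top_of_subset inter_subset_left hμt)
      hfF).trans (by gcongr; exact inter_subset_left)
  have hsdiff : ‖∫ x in s \ t, f x ∂μ‖ ≤ B * μ.real (s \ t) :=
    norm_setIntegral_le_of_norm_le_const (measure_lt_top_of_subset sdiff_subset hμs)
      fun x hx => hfB x hx.1
  have htdiff : ‖∫ x in t \ s, F x ∂μ‖ ≤ B * μ.real (t \ s) :=
    norm_setIntegral_le_of_norm_le_const (measure_lt_top_of_subset sdiff_subset hμt)
      fun x hx => hFB x hx.1
  rw [← integral_inter_add_sdiff ht hfi, ← integral_inter_add_sdiff hs hFi, inter_comm s t,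
    measureReal_symmDiff_eq hs ht hμs hμt, dist_eq_norm]
  calc ‖∫ x in t ∩ s, f x ∂μ + ∫ x in s \ t, f x ∂μ - (∫ x in t ∩ s, F x ∂μ + ∫ x in t \ s, F x ∂μ)‖
      = ‖∫ x in t ∩ s, (f x - F x) ∂μ + ∫ x in s \ t, f x ∂μ - ∫ x in t \ s, F x ∂μ‖ := by
        rw [integral_sub (hfi.mono_set inter_subset_right) (hFi.mono_set inter_subset_left)]
        ring_nf
    _ ≤ η * μ.real t + B * (μ.real (s \ t) + μ.real (t \ s)) := by
        refine (norm_sub_le _ _).trans ?_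
        linarith [norm_add_le (∫ x in t ∩ s, (f x - F x) ∂μ) (∫ x in s \ t, f x ∂μ)]

theorem tendsto_setIntegral_of_measure_symmDiff {ι : Type*} {l : Filter ι} {s : ι → Set α}
    {t : Set α} {f : ι → α → ℝ} {F : α → ℝ} {B : ℝ} (hs : ∀ i, MeasurableSet (s i))
    (ht : MeasurableSet t) (hμt : μ t ≠ ∞)
    (hf : ∀ᶠ i in l, AEStronglyMeasurable (f i) (μ.restrict (s i)))
    (hF : AEStronglyMeasurable F (μ.restrict t))
    (hfB : ∀ᶠ i in l, ∀ x ∈ s i, |f i x| ≤ B) (hFB : ∀ x ∈ t, |F x| ≤ B)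
    (hsymm : Tendsto (fun i => μ (s i ∆ t)) l (𝓝 0))
    (hfF : ∀ η > 0, ∀ᶠ i in l, ∀ x ∈ t ∩ s i, |f i x - F x| ≤ η) :
    Tendsto (fun i => ∫ x in s i, f i x ∂μ) l (𝓝 (∫ x in t, F x ∂μ)) := by
  rw [Metric.tendsto_nhds]
  intro r hr
  have hη : 0 < r / 2 / (μ.real t + 1) := by positivity
  have hsymm_real : Tendsto (fun i => B * μ.real (s i ∆ t)) l (𝓝 0) := by
    simpa [Measure.real] using ((ENNReal.tendsto_toReal ENNReal.zero_ne_top).comp hsymm).const_mul B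
  filter_upwards [hf, hfB, hfF _ hη, hsymm.eventually (gt_mem_nhds ENNReal.zero_lt_top),
    hsymm_real.eventually (gt_mem_nhds (half_pos hr))] with i hfi hfBi hfFi hfin hsmall
  have hμs : μ (s i) ≠ ∞ :=
    measure_ne_top_of_subset (le_symmDiff_sup_right _ _) (measure_union_ne_top hfin.ne hμt)
  calc dist (∫ x in s i, f i x ∂μ) (∫ x in t, F x ∂μ)
      ≤ r / 2 / (μ.real t + 1) * μ.real t + B * μ.real (s i ∆ t) :=
        dist_setIntegral_le_of_abs_sub_le hη.le (hs i) ht hμs hμt hfi hF hfBi hFB hfFi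
    _ < r := by
        have : r / 2 / (μ.real t + 1) * μ.real t ≤ r / 2 := by
          rw [div_mul_eq_mul_div, div_le_iff₀ (by positivity)]
          nlinarith [measureReal_nonneg (μ := μ) (s := t)]
        linarith

end SetIntegral

theorem tendsto_setIntegral_diffQuot_preimage_shift {E : Type*} [NormedAddCommGroup E]
    [NormedSpace ℝ E] [MeasurableSpace E] [OpensMeasurableSpace E] [ProperSpace E] {μ : Measure E}
    [IsFiniteMeasureOnCompacts μ] {Ω : Set E} (hΩ_open : IsOpen Ω)
    (hΩ_bdd : Bornology.IsBounded Ω) (hΩ0 : μ (frontier Ω) = 0) {V : E → E} (hV : Continuous V)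
    {M : ℝ} (hM : ∀ x, ‖V x‖ ≤ M) {ψ : E × ℝ → ℝ} (hψ : ContDiff ℝ 1 ψ) {a w : E → ℝ}
    (ha : Continuous a) (hw : Continuous w) {b : ℝ → E → ℝ} {C : ℝ} (hC0 : 0 ≤ C)
    (hb : ∀ᶠ ε in 𝓝[≠] 0, Measurable (b ε))
    (hC : ∀ᶠ ε in 𝓝[≠] 0, ∀ x ∈ {y | y + ε • V y ∈ Ω}, |b ε x - a x| ≤ C * |ε|)
    (hbw : ∀ η > 0, ∀ᶠ ε in 𝓝[≠] 0, ∀ x ∈ Ω ∩ {y | y + ε • V y ∈ Ω},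
      |1 / ε * (b ε x - a x) - w x| ≤ η) :
    Tendsto (fun ε => ∫ x in {y | y + ε • V y ∈ Ω}, 1 / ε * (ψ (x, b ε x) - ψ (x, a x)) ∂μ)
      (𝓝[≠] 0) (𝓝 (∫ x in Ω, fderiv ℝ ψ (x, a x) (0, 1) * w x ∂μ)) := by
  obtain ⟨S, hS, hSc, hmemS⟩ :=
    exists_isCompact_convex_mem_of_abs_sub_le (hΩ_bdd.cthickening (δ := 1 * M)) ha C
  have hgraph : ∀ᶠ ε in 𝓝[≠] 0, ∀ x ∈ {y | y + ε • V y ∈ Ω},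
      (x, a x) ∈ S ∧ (x, b ε x) ∈ S := by
    filter_upwards [hC, eventually_nhdsNE_zero_of_abs_lt one_pos fun ε _ h => h.le]
      with ε hCε hε x hx
    have hxK := preimage_shift_subset_cthickening hM hε hx
    exact ⟨hmemS x hxK _ (by simpa using hC0),
      hmemS x hxK _ ((hCε x hx).trans (mul_le_of_le_one_right hC0 hε))⟩
  obtain ⟨B₁, hB₁⟩ := exists_eventually_abs_diffQuot_le hψ hS hSc hgraph hC
  have hF : Continuous fun x => fderiv ℝ ψ (x, a x) (0, 1) * w x :=
    (((hψ.continuous_fderiv one_ne_zero).comp (continuous_id.prodMk ha)).clm_apply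
      continuous_const).mul hw
  obtain ⟨B₂, hB₂⟩ := hΩ_bdd.isCompact_closure.exists_bound_of_continuousOn hF.continuousOn
  refine tendsto_setIntegral_of_measure_symmDiff (B := max B₁ B₂)
    (fun ε => (hΩ_open.preimage (by fun_prop)).measurableSet) hΩ_open.measurableSet
    hΩ_bdd.measure_lt_top.ne ?_ hF.aestronglyMeasurable
    (hB₁.mono fun ε h x hx => (h x hx).trans (le_max_left _ _))
    (fun x hx => (hB₂ x (subset_closure hx)).trans (le_max_right _ _))
    ((tendsto_measure_symmDiff_preimage_shift (hΩ_bdd.isCompact_closure.of_isClosed_subset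
      isClosed_frontier frontier_subset_closure) hΩ0 hM).mono_left nhdsWithin_le_nhds)
    fun η hη => eventually_abs_diffQuot_sub_le hψ hS hSc (hgraph.mono fun ε h x hx => h x hx.2)
      (hC.mono fun ε h x hx => h x hx.2) hbw hη
  filter_upwards [hb] with ε hbε
  have hψ_cont := hψ.continuous
  exact Measurable.aestronglyMeasurable (by fun_prop)

/-- First-summand integral limit of the shape-derivative splitting. -/
theorem first_summand_integral_limit
    {d : ℕ} (Ω : Set (EuclideanSpace ℝ (Fin d)))
    (hΩ_open : IsOpen Ω) (hΩ_bdd : Bornology.IsBounded Ω)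
    (hfrontier : volume (frontier Ω) = 0)
    (V : EuclideanSpace ℝ (Fin d) → EuclideanSpace ℝ (Fin d))
    (hV : ContDiff ℝ 2 V) (hVbdd : ∃ M : ℝ, ∀ x, ‖V x‖ ≤ M)
    (u' : EuclideanSpace ℝ (Fin d) → ℝ) (hu' : ContDiff ℝ 2 u')
    (w : EuclideanSpace ℝ (Fin d) → ℝ) (hw : Continuous w)
    (ψ : EuclideanSpace ℝ (Fin d) × ℝ → ℝ) (hψ : ContDiff ℝ 1 ψ)
    (ε₀ : ℝ) (hε₀ : 0 < ε₀)
    (u : ℝ → EuclideanSpace ℝ (Fin d) → ℝ)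
    (hu_meas : ∀ ε ∈ Set.Icc (-ε₀) ε₀, ε ≠ 0 → Measurable (u ε))
    (hclose : ∃ C : ℝ, 0 ≤ C ∧ ∀ ε ∈ Set.Icc (-ε₀) ε₀, ε ≠ 0 →
      ∀ x ∈ {y | y + ε • V y ∈ Ω}, |u ε x - u' x| ≤ C * |ε|)
    (hconv : ∀ η : ℝ, 0 < η → ∃ δ > (0:ℝ), ∀ ε : ℝ, 0 < |ε| → |ε| < δ →
      ∀ x ∈ Ω ∩ {y | y + ε • V y ∈ Ω},
        |(1 / ε) * (u ε x - u' x) - w x| ≤ η) :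
    Tendsto (fun ε : ℝ =>
        (1 / ε) * ∫ x in {y | y + ε • V y ∈ Ω}, (ψ (x, u ε x) - ψ (x, u' x)))
      (nhdsWithin 0 {0}ᶜ)
      (nhds (∫ x in Ω, deriv (fun v : ℝ => ψ (x, v)) (u' x) * w x)) := by
  obtain ⟨C, hC0, hclose⟩ := hclose
  obtain ⟨M, hM⟩ := hVbdd
  have hsmall : ∀ᶠ ε in 𝓝[≠] (0 : ℝ), ε ∈ Icc (-ε₀) ε₀ ∧ ε ≠ 0 :=
    eventually_nhdsNE_zero_of_abs_lt hε₀ fun ε h0 h => ⟨abs_le.1 h.le, abs_pos.1 h0⟩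
  simp_rw [← integral_const_mul, deriv_apply_mk_right (hψ.differentiable one_ne_zero)]
  exact tendsto_setIntegral_diffQuot_preimage_shift hΩ_open hΩ_bdd hfrontier hV.continuous hM hψ
    hu'.continuous hw hC0 (hsmall.mono fun ε hε => hu_meas ε hε.1 hε.2)
    (hsmall.mono fun ε hε => hclose ε hε.1 hε.2)
    fun η hη => let ⟨_, hδ, h⟩ := hconv η hη; eventually_nhdsNE_zero_of_abs_lt hδ h
end
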